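/- For each of the types R_N ∈ {B_N, B_N^∨}, for all j, k ∈ {1,…,N}, ∫₀^L ∫₀^W exp(−2π𝒩 y²/(LW)) · conj(M_j(x+iy)) M_k(x+iy) dy dx = δ_{jk} h_j, where h₁ = 4 (LW/√(2𝒩W/L)) and h_j = 2 (LW/√(2𝒩W/L)) e^{2πW J(j)²/(𝒩L)} for j ∈ {2,…,N}. -/

import Mathlib

open Complex MeasureTheory
open scoped Real ComplexConjugate

noncomputable section

/-- The Jacobi theta function θ₀. -/
def jtheta0 (v τ : ℂ) : ℂ :=
  ∑' n : ℤ, (-1 : ℂ) ^ n * Complex.exp (π * I * τ * (n : ℂ) ^ 2) *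
    Complex.exp (2 * π * I * (n : ℂ) * v)

/-- The Jacobi theta function θ₁. -/
def jtheta1 (v τ : ℂ) : ℂ :=
  I * ∑' n : ℤ, (-1 : ℂ) ^ n * Complex.exp (π * I * τ * ((n : ℂ) - 1 / 2) ^ 2) *
    Complex.exp ((2 * (n : ℂ) - 1) * π * I * v)

/-- The Jacobi theta function θ₂. -/
def jtheta2 (v τ : ℂ) : ℂ :=
  ∑' n : ℤ, Complex.exp (π * I * τ * ((n : ℂ) - 1 / 2) ^ 2) *
    Complex.exp ((2 * (n : ℂ) - 1) * π * I * v)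

/-- The Jacobi theta function θ₃. -/
def jtheta3 (v τ : ℂ) : ℂ :=
  ∑' n : ℤ, Complex.exp (π * I * τ * (n : ℂ) ^ 2) * Complex.exp (2 * π * I * (n : ℂ) * v)

/-- Dedekind's eta function. -/
def dedekindEta (τ : ℂ) : ℂ :=
  Complex.exp (π * I * τ / 12) * ∏' n : ℕ, (1 - Complex.exp (2 * π * I * ((n : ℂ) + 1) * τ))

/-- For types B_N, B_N^∨:
M_j(z) = e^{2πiJz/L} θ₁(Jτ + 𝒩z/L; 𝒩τ) − e^{−2πiJz/L} θ₁(Jτ − 𝒩z/L; 𝒩τ), τ = iW/L. -/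
def MB (nn : ℕ) (L W : ℝ) (Jj : ℝ) (z : ℂ) : ℂ :=
  Complex.exp (2 * π * I * Jj * z / L) *
      jtheta1 ((Jj : ℂ) * (I * W / L) + nn * z / L) (nn * (I * W / L)) -
    Complex.exp (-(2 * π * I * Jj * z / L)) *
      jtheta1 ((Jj : ℂ) * (I * W / L) - nn * z / L) (nn * (I * W / L))

/-- The double integral of the statement for a given 𝒩 (J(j) = j − 1, 0-based: J = j). -/
def lhsInt (N nn : ℕ) (L W : ℝ) (j k : Fin N) : ℂ :=
  ∫ x in (0:ℝ)..L, ∫ y in (0:ℝ)..W,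
    (Real.exp (-(2 * π * nn * y ^ 2 / (L * W))) : ℂ) *
      (conj (MB nn L W ((j : ℕ) : ℝ) (x + I * y)) * MB nn L W ((k : ℕ) : ℝ) (x + I * y))

/-- h₁ = 4 (LW/√(2𝒩W/L)) and h_j = 2 (LW/√(2𝒩W/L)) e^{2πW J(j)²/(𝒩L)} for j ≥ 2. -/
def hB (N nn : ℕ) (L W : ℝ) (j : Fin N) : ℝ :=
  if (j : ℕ) = 0 then 4 * (L * W / Real.sqrt (2 * nn * W / L))
  else 2 * (L * W / Real.sqrt (2 * nn * W / L)) *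
    Real.exp (2 * π * W * ((j : ℕ) : ℝ) ^ 2 / (nn * L))

/-!
Expanding θ₁, each `M_j` is an absolutely convergent Fourier series `∑ aᵢ e^{2πi λᵢ z/L}` on the
strip `0 ≤ Im z ≤ W`, with frequencies `λ = ±(𝒩(n - 1/2) + J)`, all in `-𝒩/2 + ℤ`. Integrating
`conj(M_j) M_k` over `x ∈ [0, L]` kills every pair of modes with different frequencies. Since
`J(j) + J(k) < 𝒩`, the frequencies of `M_j` and `M_k` are disjoint for `j ≠ k`, and pairwise
distinct for `j = k ≠ 1`; for `j = 1` the two theta series agree after `n ↦ 1 - n`, so `M_1` is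
twice one of them. On a surviving mode the weight completes a square,
`|a|² e^{-2π𝒩y²/(LW)} e^{-4πλy/L} = e^{2πWJ²/(𝒩L)} e^{-(2π𝒩/(LW)) (y + Wλ/𝒩)²}`,
and as `λ` runs through `𝒩(n - 1/2) + J` the windows `y + Wλ/𝒩`, `y ∈ [0, W]`, tile `ℝ`: the
`y`-integrals add up to the full Gaussian integral `√(LW/(2𝒩))`.
-/

def expFreq (L s : ℝ) (z : ℂ) : ℂ := cexp (2 * π * I * s * z / L)

lemma norm_expFreq (L s : ℝ) (z : ℂ) :
    ‖expFreq L s z‖ = Real.exp (-(2 * π * s * z.im / L)) := by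
  rw [expFreq, Complex.norm_exp,
    show 2 * π * I * s * z / L = ((2 * π * s / L : ℝ) : ℂ) * z * I by push_cast; ring,
    mul_I_re, im_ofReal_mul]
  congr 1
  ring

lemma norm_expFreq_le {L W y : ℝ} (hL : 0 < L) (hy : y ∈ Set.Icc 0 W) (s x : ℝ) :
    ‖expFreq L s (x + I * y)‖ ≤ 1 + ‖expFreq L s (I * W)‖ := by
  simp only [norm_expFreq, add_im, ofReal_im, mul_im, I_re, I_im, ofReal_re, zero_mul, one_mul,
    zero_add]
  rcases le_total 0 s with hs | hs
  · refine le_add_of_le_of_nonneg (Real.exp_le_one_iff.mpr ?_) (Real.exp_pos _).le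
    have : 0 ≤ 2 * π * s * y / L := by have := hy.1; positivity
    linarith
  · refine le_add_of_nonneg_of_le zero_le_one (Real.exp_le_exp.mpr ?_)
    rw [neg_le_neg_iff]
    apply div_le_div_of_nonneg_right _ hL.le
    have := mul_le_mul_of_nonpos_left hy.2 hs
    nlinarith [Real.pi_pos]

lemma conj_expFreq_mul_expFreq (L s t x y : ℝ) :
    conj (expFreq L s (x + I * y)) * expFreq L t (x + I * y) =
      expFreq L (t - s) x * (Real.exp (-(2 * π * (s + t) * y / L)) : ℂ) := by
  simp only [expFreq, ← Complex.exp_conj, ofReal_exp, ← Complex.exp_add]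
  congr 1
  simp only [map_div₀, map_mul, conj_ofReal, conj_I, map_add, map_ofNat]
  push_cast
  linear_combination (2 * π * (s + t) * y / L : ℂ) * I_sq

lemma integral_expFreq_intCast {L : ℝ} (hL : 0 < L) (d : ℤ) :
    ∫ x in (0 : ℝ)..L, expFreq L d x = if d = 0 then (L : ℂ) else 0 := by
  split_ifs with hd
  · simp [hd, expFreq]
  have hc : 2 * π * I * d / L ≠ 0 := by
    have : (L : ℂ) ≠ 0 := by exact_mod_cast hL.ne'
    simp [hd, this, Real.pi_ne_zero]
  have key : ∀ x : ℝ, expFreq L d x = cexp (2 * π * I * d / L * x) := fun x => by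
    rw [expFreq]; push_cast; ring_nf
  simp only [key]
  rw [integral_exp_mul_complex hc, div_mul_cancel₀ _ (by exact_mod_cast hL.ne'),
    show 2 * π * I * (d : ℂ) = d * (2 * π * I) by ring, Complex.exp_int_mul_two_pi_mul_I]
  simp

lemma integral_conj_mul_expFreq_mul (L W : ℝ) (w : ℝ → ℝ) (a b : ℂ) (s t x : ℝ) :
    ∫ y in (0 : ℝ)..W, (w y : ℂ) *
        (conj (a * expFreq L s (x + I * y)) * (b * expFreq L t (x + I * y))) =
      expFreq L (t - s) x * (conj a * b) *
        ((∫ y in (0 : ℝ)..W, w y * Real.exp (-(2 * π * (s + t) * y / L)) : ℝ) : ℂ) := by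
  rw [← intervalIntegral.integral_ofReal, ← intervalIntegral.integral_const_mul]
  congr 1 with y
  rw [map_mul, mul_mul_mul_comm, conj_expFreq_mul_expFreq]
  push_cast
  ring

lemma integral_strip_conj_mul_modes {L : ℝ} (hL : 0 < L) (W ν : ℝ) (w : ℝ → ℝ) (a b : ℂ)
    (k m : ℤ) :
    ∫ x in (0 : ℝ)..L, ∫ y in (0 : ℝ)..W, (w y : ℂ) *
        (conj (a * expFreq L (k + ν) (x + I * y)) * (b * expFreq L (m + ν) (x + I * y))) =
      if k = m then
        L * (conj a * b) *
          ((∫ y in (0 : ℝ)..W, w y * Real.exp (-(4 * π * (k + ν) * y / L)) : ℝ) : ℂ)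
      else 0 := by
  simp_rw [integral_conj_mul_expFreq_mul, intervalIntegral.integral_mul_const,
    show ∀ ν : ℝ, (m + ν) - (k + ν) = ((m - k : ℤ) : ℝ) from fun ν => by push_cast; ring,
    integral_expFreq_intCast hL, sub_eq_zero, eq_comm (a := m)]
  split_ifs with h
  · subst h
    simp only [show ∀ y : ℝ, 2 * π * ((k : ℝ) + ν + (k + ν)) * y / L = 4 * π * (k + ν) * y / L
      from fun y => by ring]
  · simp

lemma norm_mul_expFreq_le {L W y : ℝ} (hL : 0 < L) (hy : y ∈ Set.Icc 0 W) (a : ℂ) (s x : ℝ) :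
    ‖a * expFreq L s (x + I * y)‖ ≤ ‖a‖ + ‖a * expFreq L s (I * W)‖ := by
  rw [norm_mul, norm_mul]
  nlinarith [norm_expFreq_le hL hy s x, norm_nonneg a]

lemma continuous_integral_conj_mul_expFreq_mul (L W : ℝ) (w : ℝ → ℝ) (a b : ℂ) (s t : ℝ) :
    Continuous fun x : ℝ => ∫ y in (0 : ℝ)..W, (w y : ℂ) *
      (conj (a * expFreq L s (x + I * y)) * (b * expFreq L t (x + I * y))) := by
  simp_rw [integral_conj_mul_expFreq_mul]
  unfold expFreq
  fun_prop

section Strip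

variable {ι κ : Type*} {L W ν : ℝ} {w : ℝ → ℝ} {a : ι → ℂ} {k : ι → ℤ} {f : ℂ → ℂ}
  {b : κ → ℂ} {m : κ → ℤ} {g : ℂ → ℂ}

lemma norm_strip_conj_mul_le (hL : 0 < L) {C y : ℝ} (hy : y ∈ Set.Icc 0 W) (hC : ‖w y‖ ≤ C)
    (p : ι × κ) (x : ℝ) :
    ‖(w y : ℂ) * (conj (a p.1 * expFreq L (k p.1 + ν) (x + I * y)) *
        (b p.2 * expFreq L (m p.2 + ν) (x + I * y)))‖ ≤
      C * ((‖a p.1‖ + ‖a p.1 * expFreq L (k p.1 + ν) (I * W)‖) *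
        (‖b p.2‖ + ‖b p.2 * expFreq L (m p.2 + ν) (I * W)‖)) := by
  rw [norm_mul, norm_mul, RCLike.norm_conj, Complex.norm_real]
  exact mul_le_mul hC (mul_le_mul (norm_mul_expFreq_le hL hy _ _ _)
    (norm_mul_expFreq_le hL hy _ _ _) (norm_nonneg _) (by positivity))
    (by positivity) ((norm_nonneg _).trans hC)

lemma hasSum_strip_conj_mul (hL : 0 < L)
    (hf : ∀ z, HasSum (fun i => a i * expFreq L (k i + ν) z) (f z))
    (hg : ∀ z, HasSum (fun j => b j * expFreq L (m j + ν) z) (g z))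
    (ha : Summable fun i => ‖a i‖) (haW : Summable fun i => ‖a i * expFreq L (k i + ν) (I * W)‖)
    (hb : Summable fun j => ‖b j‖) (hbW : Summable fun j => ‖b j * expFreq L (m j + ν) (I * W)‖)
    {y : ℝ} (hy : y ∈ Set.Icc 0 W) (x : ℝ) :
    HasSum (fun p : ι × κ => (w y : ℂ) * (conj (a p.1 * expFreq L (k p.1 + ν) (x + I * y)) *
        (b p.2 * expFreq L (m p.2 + ν) (x + I * y))))
      ((w y : ℂ) * (conj (f (x + I * y)) * g (x + I * y))) := by
  have hfz := hasSum_conj'.mpr (hf (x + I * y))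
  refine (HasSum.mul hfz (hg (x + I * y)) (summable_mul_of_summable_norm
    (f := fun i => conj (a i * expFreq L (k i + ν) (x + I * y)))
    (g := fun j => b j * expFreq L (m j + ν) (x + I * y)) ?_ ?_)).mul_left _
  · exact (ha.add haW).of_nonneg_of_le (fun _ => norm_nonneg _)
      fun i => (RCLike.norm_conj _).trans_le (norm_mul_expFreq_le hL hy _ _ _)
  · exact (hb.add hbW).of_nonneg_of_le (fun _ => norm_nonneg _)
      fun j => norm_mul_expFreq_le hL hy _ _ _

theorem hasSum_integral_strip_conj_mul [Countable ι] [Countable κ]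
    (hL : 0 < L) (hW : 0 ≤ W) (hw : Continuous w)
    (hf : ∀ z, HasSum (fun i => a i * expFreq L (k i + ν) z) (f z))
    (hg : ∀ z, HasSum (fun j => b j * expFreq L (m j + ν) z) (g z))
    (ha : Summable fun i => ‖a i‖) (haW : Summable fun i => ‖a i * expFreq L (k i + ν) (I * W)‖)
    (hb : Summable fun j => ‖b j‖) (hbW : Summable fun j => ‖b j * expFreq L (m j + ν) (I * W)‖) :
    HasSum (fun p : ι × κ => if k p.1 = m p.2 then
        L * (conj (a p.1) * b p.2) *
          ((∫ y in (0 : ℝ)..W, w y * Real.exp (-(4 * π * (k p.1 + ν) * y / L)) : ℝ) : ℂ)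
        else 0)
      (∫ x in (0 : ℝ)..L, ∫ y in (0 : ℝ)..W,
        (w y : ℂ) * (conj (f (x + I * y)) * g (x + I * y))) := by
  obtain ⟨C, hC⟩ := isCompact_Icc.exists_bound_of_continuousOn (hw.continuousOn (s := Set.Icc 0 W))
  have hAB : Summable fun p : ι × κ =>
      (‖a p.1‖ + ‖a p.1 * expFreq L (k p.1 + ν) (I * W)‖) *
        (‖b p.2‖ + ‖b p.2 * expFreq L (m p.2 + ν) (I * W)‖) :=
    (ha.add haW).mul_of_nonneg (hb.add hbW) (fun _ => by positivity) (fun _ => by positivity)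
  have hmem : ∀ y ∈ Set.uIoc 0 W, y ∈ Set.Icc 0 W := fun y hy =>
    Set.Ioc_subset_Icc_self (by rwa [Set.uIoc_of_le hW] at hy)
  have h_inner (x : ℝ) := intervalIntegral.hasSum_integral_of_dominated_convergence
    (μ := volume) (a := 0) (b := W) (fun p _ => C * _) (fun p => by unfold expFreq; fun_prop)
    (fun p => .of_forall fun y hy => norm_strip_conj_mul_le hL (hmem y hy) (hC y (hmem y hy)) p x)
    (.of_forall fun _ _ => hAB.mul_left C) intervalIntegrable_const
    (.of_forall fun y hy => hasSum_strip_conj_mul hL hf hg ha haW hb hbW (hmem y hy) x)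
  have h_outer := intervalIntegral.hasSum_integral_of_dominated_convergence
    (μ := volume) (a := 0) (b := L) (fun p _ => C * _ * W)
    (fun p => (continuous_integral_conj_mul_expFreq_mul L W w _ _ _ _).aestronglyMeasurable)
    (fun p => .of_forall fun x _ => (intervalIntegral.norm_integral_le_of_norm_le_const
        fun y hy => norm_strip_conj_mul_le hL (hmem y hy) (hC y (hmem y hy)) p x).trans_eq
      (by rw [sub_zero, abs_of_nonneg hW]))
    (.of_forall fun _ _ => (hAB.mul_left C).mul_right W) intervalIntegrable_const
    (.of_forall fun x _ => h_inner x)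
  exact h_outer.congr_fun fun p => (integral_strip_conj_mul_modes hL W ν w _ _ _ _).symm

end Strip

def jtheta1Term (v τ : ℂ) (n : ℤ) : ℂ :=
  (-1 : ℂ) ^ n * cexp (π * I * τ * ((n : ℂ) - 1 / 2) ^ 2) * cexp ((2 * (n : ℂ) - 1) * π * I * v)

lemma norm_jtheta1Term (v τ : ℂ) (n : ℤ) :
    ‖jtheta1Term v τ n‖ =
      Real.exp (π * v.im - π * τ.im / 4) * ‖jacobiTheta₂_term n (v - τ / 2) τ‖ := by
  rw [jtheta1Term, norm_jacobiTheta₂_term, norm_mul, norm_mul, norm_zpow, norm_neg, norm_one,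
    one_zpow, one_mul, Complex.norm_exp, Complex.norm_exp, ← Real.exp_add, ← Real.exp_add,
    show π * I * τ * ((n : ℂ) - 1 / 2) ^ 2 = (π * ((n : ℝ) - 1 / 2) ^ 2 : ℝ) * τ * I by
      push_cast; ring,
    show (2 * (n : ℂ) - 1) * π * I * v = ((2 * n - 1) * π : ℝ) * v * I by push_cast; ring,
    mul_I_re, mul_I_re, im_ofReal_mul, im_ofReal_mul, sub_im, div_ofNat_im]
  congr 1
  ring

lemma summable_norm_jtheta1Term (v : ℂ) {τ : ℂ} (hτ : 0 < τ.im) :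
    Summable fun n => ‖jtheta1Term v τ n‖ := by
  simp_rw [norm_jtheta1Term]
  exact ((summable_jacobiTheta₂_term_iff _ τ).mpr hτ).norm.mul_left _

lemma hasSum_jtheta1 (v : ℂ) {τ : ℂ} (hτ : 0 < τ.im) :
    HasSum (fun n => I * jtheta1Term v τ n) (jtheta1 v τ) :=
  ((summable_norm_jtheta1Term v hτ).of_norm.hasSum).mul_left I

lemma cexp_mul_jtheta1Term (A v τ : ℂ) (n : ℤ) :
    cexp A * jtheta1Term v τ n =
      (-1) ^ n * cexp (A + π * I * τ * ((n : ℂ) - 1 / 2) ^ 2 + (2 * n - 1) * π * I * v) := by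
  rw [jtheta1Term, Complex.exp_add, Complex.exp_add]
  ring

lemma Int.eq_and_eq_of_mul_add_eq_mul_add {d q q' r r' : ℤ} (hr : |r - r'| < d)
    (h : d * q + r = d * q' + r') : q = q' ∧ r = r' := by
  have hrr : r - r' = 0 := Int.eq_zero_of_abs_lt_dvd ⟨q' - q, by linear_combination h⟩ hr
  have hd : d ≠ 0 := by have := abs_nonneg (r - r'); omega
  exact ⟨mul_left_cancel₀ hd (by linear_combination h - hrr), by linear_combination hrr⟩

lemma hasSum_ite_eq_iff_hasSum_diag {ι α M : Type*} [DecidableEq α] [AddCommMonoid M]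
    [TopologicalSpace M] {k : ι → α} (hk : Function.Injective k) (G : ι × ι → M) {S : M} :
    HasSum (fun p => if k p.1 = k p.2 then G p else 0) S ↔ HasSum (fun i => G (i, i)) S := by
  have hsupp : ∀ p ∉ Set.range fun i : ι => (i, i),
      (if k p.1 = k p.2 then G p else 0) = 0 := by
    rintro ⟨i, j⟩ hij
    rw [if_neg]
    intro h
    obtain rfl : i = j := hk h
    exact hij ⟨i, rfl⟩
  rw [← Function.Injective.hasSum_iff (fun i j h => (Prod.mk.inj h).1) hsupp]
  simp [Function.comp_def]

lemma hasSum_intervalIntegral_comp_add_mul {f : ℝ → ℝ} (hf : Integrable f) {W : ℝ} (hW : 0 < W)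
    (c : ℝ) : HasSum (fun n : ℤ => ∫ y in (0 : ℝ)..W, f (y + (c + n * W))) (∫ y, f y) := by
  have h := ((hf.comp_mul_left' hW.ne').hasSum_intervalIntegral (c / W)).mul_left W
  rw [Measure.integral_comp_mul_left, abs_of_pos (inv_pos.mpr hW), smul_eq_mul, ← mul_assoc,
    mul_inv_cancel₀ hW.ne', one_mul] at h
  refine h.congr_fun fun n => ?_
  rw [intervalIntegral.integral_comp_add_right, ← smul_eq_mul (a := W),
    intervalIntegral.smul_integral_comp_mul_left]
  congr 1 <;> field_simp <;> ring

lemma hasSum_integral_gaussian_window {β W : ℝ} (hβ : 0 < β) (hW : 0 < W) (c : ℝ) :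
    HasSum (fun n : ℤ => ∫ y in (0 : ℝ)..W, Real.exp (-β * (y + (c + n * W)) ^ 2))
      (Real.sqrt (π / β)) := by
  simpa only [integral_gaussian] using
    hasSum_intervalIntegral_comp_add_mul (integrable_exp_neg_mul_sq hβ) hW c

def mbWeight (nn : ℕ) (L W : ℝ) (J : ℕ) (n : ℤ) : ℝ :=
  Real.exp (-(π * W / L) * (nn * ((n : ℝ) - 1 / 2) ^ 2 + (2 * n - 1) * J))

-- `MB nn L W J z = ∑ i, mbCoeff i * expFreq L (mbIndex i - nn / 2) z`, where `.inl n` and `.inr n`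
-- index the `n`-th terms of the first and of the second theta series in `MB`.
def mbIndex (nn J : ℕ) : ℤ ⊕ ℤ → ℤ :=
  Sum.elim (fun n => nn * n + J) (fun n => nn * (1 - n) - J)

def mbCoeff (nn : ℕ) (L W : ℝ) (J : ℕ) : ℤ ⊕ ℤ → ℂ :=
  Sum.elim (fun n => I * ((-1) ^ n * mbWeight nn L W J n))
    (fun n => -(I * ((-1) ^ n * mbWeight nn L W J n)))

section MBSeries

variable {N nn : ℕ} {L W : ℝ}

lemma cexp_mul_jtheta1Term_add (J : ℕ) (n : ℤ) (z : ℂ) :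
    cexp (2 * π * I * ((J : ℝ) : ℂ) * z / L) *
        jtheta1Term (((J : ℝ) : ℂ) * (I * W / L) + nn * z / L) (nn * (I * W / L)) n =
      (-1) ^ n * mbWeight nn L W J n * expFreq L (mbIndex nn J (.inl n) + -(nn / 2 : ℝ)) z := by
  rw [cexp_mul_jtheta1Term, mbWeight, expFreq, ofReal_exp, mul_assoc ((-1 : ℂ) ^ n),
    ← Complex.exp_add]
  congr 2
  simp only [mbIndex, Sum.elim_inl]
  push_cast
  linear_combination (π * nn * W / L * ((n : ℂ) - 1 / 2) ^ 2 + (2 * n - 1) * π * J * W / L) * I_sq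

lemma cexp_mul_jtheta1Term_sub (J : ℕ) (n : ℤ) (z : ℂ) :
    cexp (-(2 * π * I * ((J : ℝ) : ℂ) * z / L)) *
        jtheta1Term (((J : ℝ) : ℂ) * (I * W / L) - nn * z / L) (nn * (I * W / L)) n =
      (-1) ^ n * mbWeight nn L W J n * expFreq L (mbIndex nn J (.inr n) + -(nn / 2 : ℝ)) z := by
  rw [cexp_mul_jtheta1Term, mbWeight, expFreq, ofReal_exp, mul_assoc ((-1 : ℂ) ^ n),
    ← Complex.exp_add]
  congr 2
  simp only [mbIndex, Sum.elim_inr]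
  push_cast
  linear_combination (π * nn * W / L * ((n : ℂ) - 1 / 2) ^ 2 + (2 * n - 1) * π * J * W / L) * I_sq

lemma hasSum_mbCoeff_mul_expFreq_inl (J : ℕ) (hτ : 0 < ((nn : ℂ) * (I * W / L)).im) (z : ℂ) :
    HasSum (fun n =>
        mbCoeff nn L W J (.inl n) * expFreq L (mbIndex nn J (.inl n) + -(nn / 2 : ℝ)) z)
      (cexp (2 * π * I * ((J : ℝ) : ℂ) * z / L) *
        jtheta1 (((J : ℝ) : ℂ) * (I * W / L) + nn * z / L) (nn * (I * W / L))) :=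
  ((hasSum_jtheta1 _ hτ).mul_left _).congr_fun fun n => by
    rw [mul_left_comm, cexp_mul_jtheta1Term_add, mbCoeff, Sum.elim_inl]; ring

lemma hasSum_mbCoeff_mul_expFreq_inr (J : ℕ) (hτ : 0 < ((nn : ℂ) * (I * W / L)).im) (z : ℂ) :
    HasSum (fun n =>
        mbCoeff nn L W J (.inr n) * expFreq L (mbIndex nn J (.inr n) + -(nn / 2 : ℝ)) z)
      (-(cexp (-(2 * π * I * ((J : ℝ) : ℂ) * z / L)) *
        jtheta1 (((J : ℝ) : ℂ) * (I * W / L) - nn * z / L) (nn * (I * W / L)))) :=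
  ((hasSum_jtheta1 _ hτ).mul_left _).neg.congr_fun fun n => by
    rw [mul_left_comm, cexp_mul_jtheta1Term_sub, mbCoeff, Sum.elim_inr]; ring

lemma hasSum_mbCoeff_mul_expFreq (J : ℕ) (hτ : 0 < ((nn : ℂ) * (I * W / L)).im) (z : ℂ) :
    HasSum (fun i => mbCoeff nn L W J i * expFreq L (mbIndex nn J i + -(nn / 2 : ℝ)) z)
      (MB nn L W J z) := by
  rw [MB, sub_eq_add_neg]
  exact (hasSum_mbCoeff_mul_expFreq_inl J hτ z).sum (hasSum_mbCoeff_mul_expFreq_inr J hτ z)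

lemma summable_norm_mbCoeff_mul_expFreq (J : ℕ) (hτ : 0 < ((nn : ℂ) * (I * W / L)).im) (z : ℂ) :
    Summable fun i => ‖mbCoeff nn L W J i * expFreq L (mbIndex nn J i + -(nn / 2 : ℝ)) z‖ := by
  refine Summable.sum _ ?_ ?_
  · refine ((summable_norm_jtheta1Term (((J : ℝ) : ℂ) * (I * W / L) + nn * z / L) hτ).mul_left
      ‖cexp (2 * π * I * ((J : ℝ) : ℂ) * z / L)‖).congr fun n => ?_
    rw [← norm_mul, cexp_mul_jtheta1Term_add]
    simp [mbCoeff]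
  · refine ((summable_norm_jtheta1Term (((J : ℝ) : ℂ) * (I * W / L) - nn * z / L) hτ).mul_left
      ‖cexp (-(2 * π * I * ((J : ℝ) : ℂ) * z / L))‖).congr fun n => ?_
    rw [← norm_mul, cexp_mul_jtheta1Term_sub]
    simp [mbCoeff]

lemma mbCoeff_zero_inr_mul_expFreq (n : ℤ) (z : ℂ) :
    mbCoeff nn L W 0 (.inr n) * expFreq L (mbIndex nn 0 (.inr n) + -(nn / 2 : ℝ)) z =
      mbCoeff nn L W 0 (.inl (1 - n)) *
        expFreq L (mbIndex nn 0 (.inl (1 - n)) + -(nn / 2 : ℝ)) z := by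
  have hsign : (-1 : ℂ) ^ (1 - n) = -(-1) ^ n := by
    rw [zpow_sub₀ (by norm_num), zpow_one, neg_div, one_div, ← inv_zpow, inv_neg_one]
  simp only [mbCoeff, mbIndex, mbWeight, Sum.elim_inl, Sum.elim_inr, hsign]
  push_cast
  ring_nf

lemma hasSum_mbCoeff_zero_mul_expFreq (hτ : 0 < ((nn : ℂ) * (I * W / L)).im) (z : ℂ) :
    HasSum (fun n : ℤ => 2 * mbCoeff nn L W 0 (.inl n) *
        expFreq L (mbIndex nn 0 (.inl n) + -(nn / 2 : ℝ)) z) (MB nn L W ((0 : ℕ) : ℝ) z) := by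
  have hinl := hasSum_mbCoeff_mul_expFreq_inl 0 hτ z
  have hinl' : HasSum (fun n => mbCoeff nn L W 0 (.inl n) *
      expFreq L (mbIndex nn 0 (.inl n) + -(nn / 2 : ℝ)) z) _ :=
    (Equiv.subLeft (1 : ℤ)).hasSum_iff.mp ((hasSum_mbCoeff_mul_expFreq_inr 0 hτ z).congr_fun
      fun n => (mbCoeff_zero_inr_mul_expFreq n z).symm)
  rw [MB, sub_eq_add_neg, ← hinl.unique hinl', ← two_mul]
  exact (hinl.mul_left 2).congr_fun fun n => mul_assoc _ _ _

lemma mbIndex_eq_mbIndex {J K : ℕ} (h : J + K < nn) {i i' : ℤ ⊕ ℤ}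
    (he : mbIndex nn J i = mbIndex nn K i') : J = K ∧ (J = 0 ∨ i = i') := by
  rcases i with n | n <;> rcases i' with m | m <;>
    simp only [mbIndex, Sum.elim_inl, Sum.elim_inr, Sum.inl.injEq, Sum.inr.injEq, reduceCtorEq,
      or_false] at he ⊢
  · obtain ⟨h1, h2⟩ := Int.eq_and_eq_of_mul_add_eq_mul_add (r := J) (r' := K)
      (by rw [abs_lt]; omega) he
    omega
  · obtain ⟨-, h2⟩ := Int.eq_and_eq_of_mul_add_eq_mul_add (d := nn) (q := n) (q' := 1 - m)
      (r := J) (r' := -K) (by rw [abs_lt]; omega) (by linear_combination he)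
    omega
  · obtain ⟨-, h2⟩ := Int.eq_and_eq_of_mul_add_eq_mul_add (d := nn) (q := 1 - n) (q' := m)
      (r := -J) (r' := K) (by rw [abs_lt]; omega) (by linear_combination he)
    omega
  · obtain ⟨h1, h2⟩ := Int.eq_and_eq_of_mul_add_eq_mul_add (d := nn) (q := 1 - n) (q' := 1 - m)
      (r := -J) (r' := -K) (by rw [abs_lt]; omega) (by linear_combination he)
    omega

lemma conj_mbCoeff_mul_self (hL : L ≠ 0) (hnn : (nn : ℝ) ≠ 0) (J : ℕ) (i : ℤ ⊕ ℤ) :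
    conj (mbCoeff nn L W J i) * mbCoeff nn L W J i =
      (Real.exp (2 * π * W / (L * nn) * (J ^ 2 - (mbIndex nn J i + -(nn / 2 : ℝ)) ^ 2)) : ℂ) := by
  rw [Complex.conj_mul', ← ofReal_pow]
  congr 1
  rcases i with n | n <;>
  · simp only [mbCoeff, mbIndex, mbWeight, Sum.elim_inl, Sum.elim_inr, norm_neg, norm_mul, norm_I,
      norm_zpow, norm_neg, norm_one, one_zpow, one_mul, Complex.norm_real,
      Real.norm_of_nonneg (Real.exp_pos _).le, ← Real.exp_nat_mul]
    congr 1
    push_cast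
    field_simp
    ring

lemma exp_mul_gaussian_mul_exp (hL : L ≠ 0) (hW : W ≠ 0) (hnn : (nn : ℝ) ≠ 0) (J c y : ℝ) :
    Real.exp (2 * π * W / (L * nn) * (J ^ 2 - c ^ 2)) *
        (Real.exp (-(2 * π * nn * y ^ 2 / (L * W))) * Real.exp (-(4 * π * c * y / L))) =
      Real.exp (2 * π * W * J ^ 2 / (nn * L)) *
        Real.exp (-(2 * π * nn / (L * W)) * (y + W * c / nn) ^ 2) := by
  rw [← Real.exp_add, ← Real.exp_add, ← Real.exp_add]
  congr 1
  field_simp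
  ring

lemma im_natCast_mul_I_mul_div_pos (hL : 0 < L) (hW : 0 < W) (hnn : 0 < nn) :
    0 < ((nn : ℂ) * (I * W / L)).im := by
  rw [show (nn : ℂ) * (I * W / L) = ((nn * W / L : ℝ) : ℂ) * I by push_cast; ring, mul_I_im,
    ofReal_re]
  positivity

lemma summable_norm_mbCoeff (hτ : 0 < ((nn : ℂ) * (I * W / L)).im) (J : ℕ) :
    Summable fun i => ‖mbCoeff nn L W J i‖ := by
  simpa [expFreq] using summable_norm_mbCoeff_mul_expFreq J hτ 0

lemma hasSum_lhsInt (hL : 0 < L) (hW : 0 < W) (hnn : 0 < nn) (j k : Fin N) :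
    HasSum (fun p : (ℤ ⊕ ℤ) × (ℤ ⊕ ℤ) => if mbIndex nn j p.1 = mbIndex nn k p.2 then
        L * (conj (mbCoeff nn L W j p.1) * mbCoeff nn L W k p.2) *
          ((∫ y in (0 : ℝ)..W, Real.exp (-(2 * π * nn * y ^ 2 / (L * W))) *
            Real.exp (-(4 * π * (mbIndex nn j p.1 + -(nn / 2 : ℝ)) * y / L)) : ℝ) : ℂ)
        else 0)
      (lhsInt N nn L W j k) :=
  have hτ := im_natCast_mul_I_mul_div_pos hL hW hnn
  hasSum_integral_strip_conj_mul hL hW.le (by fun_prop) (hasSum_mbCoeff_mul_expFreq _ hτ)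
    (hasSum_mbCoeff_mul_expFreq _ hτ) (summable_norm_mbCoeff hτ _)
    (summable_norm_mbCoeff_mul_expFreq _ hτ _) (summable_norm_mbCoeff hτ _)
    (summable_norm_mbCoeff_mul_expFreq _ hτ _)

lemma lhsInt_eq_zero (hL : 0 < L) (hW : 0 < W) {j k : Fin N} (hjk : j ≠ k)
    (h : (j : ℕ) + k < nn) : lhsInt N nn L W j k = 0 :=
  (hasSum_lhsInt hL hW (by omega) j k).unique <| hasSum_zero.congr_fun fun _ =>
    if_neg fun he => hjk (Fin.ext (mbIndex_eq_mbIndex h he).1)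

lemma ofReal_mul_conj_mbCoeff_mul_self_mul (hL : 0 < L) (hW : 0 < W) (hnn : 0 < nn) (J : ℕ)
    (i : ℤ ⊕ ℤ) :
    (L : ℂ) * (conj (mbCoeff nn L W J i) * mbCoeff nn L W J i) *
        ((∫ y in (0 : ℝ)..W, Real.exp (-(2 * π * nn * y ^ 2 / (L * W))) *
          Real.exp (-(4 * π * (mbIndex nn J i + -(nn / 2 : ℝ)) * y / L)) : ℝ) : ℂ) =
      ((L * Real.exp (2 * π * W * J ^ 2 / (nn * L)) * ∫ y in (0 : ℝ)..W,
        Real.exp (-(2 * π * nn / (L * W)) * (y + W * (mbIndex nn J i + -(nn / 2 : ℝ)) / nn) ^ 2)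
          : ℝ) : ℂ) := by
  have hnn' : (nn : ℝ) ≠ 0 := by positivity
  have key : Real.exp (2 * π * W / (L * nn) * (J ^ 2 - (mbIndex nn J i + -(nn / 2 : ℝ)) ^ 2)) *
      ∫ y in (0 : ℝ)..W, Real.exp (-(2 * π * nn * y ^ 2 / (L * W))) *
        Real.exp (-(4 * π * (mbIndex nn J i + -(nn / 2 : ℝ)) * y / L)) =
      Real.exp (2 * π * W * J ^ 2 / (nn * L)) * ∫ y in (0 : ℝ)..W,
        Real.exp (-(2 * π * nn / (L * W)) *
          (y + W * (mbIndex nn J i + -(nn / 2 : ℝ)) / nn) ^ 2) := by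
    rw [← intervalIntegral.integral_const_mul, ← intervalIntegral.integral_const_mul]
    simp_rw [exp_mul_gaussian_mul_exp hL.ne' hW.ne' hnn']
  rw [conj_mbCoeff_mul_self hL.ne' hnn', ← ofReal_mul, ← ofReal_mul, mul_assoc L, key, ← mul_assoc]

lemma hasSum_integral_gaussian_mbIndex_inl (hL : 0 < L) (hW : 0 < W) (hnn : 0 < nn) (J : ℕ) :
    HasSum (fun n : ℤ => ∫ y in (0 : ℝ)..W, Real.exp (-(2 * π * nn / (L * W)) *
        (y + W * (mbIndex nn J (.inl n) + -(nn / 2 : ℝ)) / nn) ^ 2))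
      (Real.sqrt (π / (2 * π * nn / (L * W)))) := by
  have hnn' : (nn : ℝ) ≠ 0 := by positivity
  refine (hasSum_integral_gaussian_window (by positivity) hW (W * (J / nn - 1 / 2))).congr_fun
    fun n => ?_
  simp only [mbIndex, Sum.elim_inl]
  congr! 5
  push_cast
  field_simp
  ring

lemma hasSum_integral_gaussian_mbIndex_inr (hL : 0 < L) (hW : 0 < W) (hnn : 0 < nn) (J : ℕ) :
    HasSum (fun n : ℤ => ∫ y in (0 : ℝ)..W, Real.exp (-(2 * π * nn / (L * W)) *
        (y + W * (mbIndex nn J (.inr n) + -(nn / 2 : ℝ)) / nn) ^ 2))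
      (Real.sqrt (π / (2 * π * nn / (L * W)))) := by
  have hnn' : (nn : ℝ) ≠ 0 := by positivity
  refine ((Equiv.neg ℤ).hasSum_iff.mpr (hasSum_integral_gaussian_window (by positivity) hW
    (W * (1 / 2 - J / nn)))).congr_fun fun n => ?_
  simp only [Function.comp_apply, mbIndex, Sum.elim_inr, Equiv.neg_apply]
  congr! 5
  push_cast
  field_simp
  ring

lemma hasSum_integral_gaussian_mbIndex (hL : 0 < L) (hW : 0 < W) (hnn : 0 < nn) (J : ℕ) :
    HasSum (fun i : ℤ ⊕ ℤ => ∫ y in (0 : ℝ)..W,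
        Real.exp (-(2 * π * nn / (L * W)) * (y + W * (mbIndex nn J i + -(nn / 2 : ℝ)) / nn) ^ 2))
      (2 * Real.sqrt (π / (2 * π * nn / (L * W)))) := by
  rw [two_mul (Real.sqrt _)]
  exact HasSum.sum (f := fun i : ℤ ⊕ ℤ => ∫ y in (0 : ℝ)..W,
    Real.exp (-(2 * π * nn / (L * W)) * (y + W * (mbIndex nn J i + -(nn / 2 : ℝ)) / nn) ^ 2))
    (hasSum_integral_gaussian_mbIndex_inl hL hW hnn J)
    (hasSum_integral_gaussian_mbIndex_inr hL hW hnn J)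

lemma sqrt_pi_div_eq (hL : 0 < L) (hW : 0 < W) (hnn : 0 < nn) :
    Real.sqrt (π / (2 * π * nn / (L * W))) = W / Real.sqrt (2 * nn * W / L) := by
  rw [eq_div_iff (by positivity), ← Real.sqrt_mul (by positivity),
    show π / (2 * π * nn / (L * W)) * (2 * nn * W / L) = W ^ 2 by field_simp, Real.sqrt_sq hW.le]

lemma lhsInt_self_of_ne_zero (hL : 0 < L) (hW : 0 < W) {j : Fin N} (hj : (j : ℕ) ≠ 0)
    (h : 2 * (j : ℕ) < nn) :
    lhsInt N nn L W j j = ((2 * (L * W / Real.sqrt (2 * nn * W / L)) *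
      Real.exp (2 * π * W * ((j : ℕ) : ℝ) ^ 2 / (nn * L)) : ℝ) : ℂ) := by
  have hnn : 0 < nn := by omega
  have hinj : Function.Injective (mbIndex nn j) := fun i i' he =>
    (mbIndex_eq_mbIndex (by omega) he).2.resolve_left hj
  refine ((hasSum_ite_eq_iff_hasSum_diag hinj _).mp (hasSum_lhsInt hL hW hnn j j)).unique ?_
  simp_rw [ofReal_mul_conj_mbCoeff_mul_self_mul hL hW hnn, Complex.hasSum_ofReal]
  rw [show 2 * (L * W / Real.sqrt (2 * nn * W / L)) *
      Real.exp (2 * π * W * ((j : ℕ) : ℝ) ^ 2 / (nn * L)) =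
      L * Real.exp (2 * π * W * ((j : ℕ) : ℝ) ^ 2 / (nn * L)) *
        (2 * Real.sqrt (π / (2 * π * nn / (L * W)))) by rw [sqrt_pi_div_eq hL hW hnn]; ring]
  exact (hasSum_integral_gaussian_mbIndex hL hW hnn j).mul_left _

lemma lhsInt_self_of_eq_zero (hL : 0 < L) (hW : 0 < W) (hnn : 0 < nn) {j : Fin N}
    (hj : (j : ℕ) = 0) :
    lhsInt N nn L W j j = ((4 * (L * W / Real.sqrt (2 * nn * W / L)) : ℝ) : ℂ) := by
  have hτ := im_natCast_mul_I_mul_div_pos hL hW hnn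
  have hS (z : ℂ) : Summable fun n : ℤ => ‖2 * mbCoeff nn L W 0 (.inl n) *
      expFreq L (mbIndex nn 0 (.inl n) + -(nn / 2 : ℝ)) z‖ :=
    (((summable_norm_mbCoeff_mul_expFreq 0 hτ z).comp_injective Sum.inl_injective).mul_left 2).congr
      fun n => by simp [mul_assoc]
  have hinj : Function.Injective fun n : ℤ => mbIndex nn 0 (.inl n) := fun n m he => by
    simpa [mbIndex, hnn.ne'] using he
  have hpair := hasSum_integral_strip_conj_mul hL hW.le
    (w := fun y => Real.exp (-(2 * π * nn * y ^ 2 / (L * W)))) (by fun_prop)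
    (hasSum_mbCoeff_zero_mul_expFreq hτ) (hasSum_mbCoeff_zero_mul_expFreq hτ)
    (by simpa [expFreq] using hS 0) (hS _) (by simpa [expFreq] using hS 0) (hS _)
  rw [lhsInt, hj]
  refine ((hasSum_ite_eq_iff_hasSum_diag hinj _).mp hpair).unique ?_
  rw [show ((4 * (L * W / Real.sqrt (2 * nn * W / L)) : ℝ) : ℂ) =
      4 * ((L * Real.exp (2 * π * W * ((0 : ℕ) : ℝ) ^ 2 / (nn * L)) *
        Real.sqrt (π / (2 * π * nn / (L * W))) : ℝ) : ℂ) by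
    rw [sqrt_pi_div_eq hL hW hnn, Nat.cast_zero, zero_pow two_ne_zero, mul_zero, zero_div,
      Real.exp_zero]
    push_cast
    ring]
  refine ((Complex.hasSum_ofReal.mpr ((hasSum_integral_gaussian_mbIndex_inl hL hW hnn 0).mul_left
    _)).mul_left 4).congr_fun fun n => ?_
  rw [← ofReal_mul_conj_mbCoeff_mul_self_mul hL hW hnn, map_mul, map_ofNat]
  ring

end MBSeries

lemma lhsInt_eq {N nn : ℕ} {L W : ℝ} (hL : 0 < L) (hW : 0 < W) (h : 2 * N ≤ nn + 1)
    (j k : Fin N) :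
    lhsInt N nn L W j k = if j = k then ((hB N nn L W j : ℝ) : ℂ) else 0 := by
  have hj := j.isLt
  have hk := k.isLt
  split_ifs with hjk
  · subst hjk
    rw [hB]
    split_ifs with hj0
    · exact lhsInt_self_of_eq_zero hL hW (by omega) hj0
    · exact lhsInt_self_of_ne_zero hL hW hj0 (by omega)
  · exact lhsInt_eq_zero hL hW hjk (by omega)

theorem statement7_general (N : ℕ) (L W : ℝ) (hL : 0 < L) (hW : 0 < W)
    (j k : Fin N) :
    -- type B_N : 𝒩 = 2N−1
    (lhsInt N (2 * N - 1) L W j k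
      = if j = k then ((hB N (2 * N - 1) L W j : ℝ) : ℂ) else 0) ∧
    -- type B_N^∨ : 𝒩 = 2N
    (lhsInt N (2 * N) L W j k
      = if j = k then ((hB N (2 * N) L W j : ℝ) : ℂ) else 0) :=
  ⟨lhsInt_eq hL hW (by omega) j k, lhsInt_eq hL hW (by omega) j k⟩

theorem statement7 (N : ℕ) (hN : 1 ≤ N) (L W : ℝ) (hL : 0 < L) (hW : 0 < W)
    (j k : Fin N) :
    -- type B_N : 𝒩 = 2N−1
    (lhsInt N (2 * N - 1) L W j k
      = if j = k then ((hB N (2 * N - 1) L W j : ℝ) : ℂ) else 0) ∧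
    -- type B_N^∨ : 𝒩 = 2N
    (lhsInt N (2 * N) L W j k
      = if j = k then ((hB N (2 * N) L W j : ℝ) : ℂ) else 0) :=
  statement7_general N L W hL hW j k
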